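/- Let ≿ be a total preorder on a finite set H, let W ⊆ H and a ∈ W with a ≿ w for all w ∈ W, and let S = { w ∈ W : w ≿ a and a ≿ w }. Then the number of strict linear extensions ≻ of ≿ in which a ≻ w for every w ∈ W \ {a}, multiplied by |S|, equals the total number of strict linear extensions of ≿. (Hence under a uniformly random linear extension, a is preferred to all other elements of W with probability exactly 1/|S|.) -/

import Mathlib

/-- A strict linear order on `H`, given as a relation together with a proof that it is a
strict total order. -/
def StrictLinearOrder (H : Type*) : Type _ :=
  {r : H → H → Prop // IsStrictTotalOrder H r}

/-- A total preorder: a reflexive, transitive and total relation. -/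
def IsTotalPreorderRel {H : Type*} (R : H → H → Prop) : Prop :=
  Reflexive R ∧ Transitive R ∧ ∀ a b : H, R a b ∨ R b a

/-- `r` is a linear extension of the (weak) relation `R`: whenever `a` is strictly preferred to
`b` under `R`, `a` is ranked above `b` by `r`. -/
def IsLinearExtension {H : Type*} (R : H → H → Prop) (r : StrictLinearOrder H) : Prop :=
  ∀ a b : H, R a b → ¬ R b a → r.1 a b

/-!
Conjugating a linear extension by the transposition of two `R`-equivalent elements gives again
a linear extension. Let `S` be the `R`-class of `a` inside `W`. Every linear extension `r` is
obtained in exactly one way from a pair `(p, s)`, where `p` is a linear extension ranking `a`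
first in `W` and `s ∈ S`, by conjugating `p` with the transposition `(a s)`: necessarily `s` is
the `r`-first element of `S`, which is also `r`-first in `W` since the elements of `W \ S` lie
strictly below `a`.
-/

namespace StrictLinearOrder

variable {α β : Type*}

def comap (f : α ↪ β) (r : StrictLinearOrder β) : StrictLinearOrder α :=
  haveI := r.2
  ⟨f ⁻¹'o r.1, (RelEmbedding.preimage f r.1).isStrictTotalOrder⟩

@[simp]
theorem comap_apply (f : α ↪ β) (r : StrictLinearOrder β) (x y : α) :
    (r.comap f).1 x y ↔ r.1 (f x) (f y) :=
  Iff.rfl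

theorem comap_swap_comap_swap [DecidableEq α] (a b : α) (r : StrictLinearOrder α) :
    (r.comap (Equiv.swap a b).toEmbedding).comap (Equiv.swap a b).toEmbedding = r :=
  Subtype.ext <| by funext x y; simp

def IsTopIn (r : StrictLinearOrder α) (s : Set α) (m : α) : Prop :=
  ∀ x ∈ s, x ≠ m → r.1 m x

theorem IsTopIn.mono {r : StrictLinearOrder α} {s t : Set α} {m : α} (h : r.IsTopIn t m)
    (hst : s ⊆ t) : r.IsTopIn s m :=
  fun x hx => h x (hst hx)

theorem IsTopIn.unique {r : StrictLinearOrder α} {s : Set α} {m₁ m₂ : α} (h₁ : r.IsTopIn s m₁)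
    (h₂ : r.IsTopIn s m₂) (hm₁ : m₁ ∈ s) (hm₂ : m₂ ∈ s) : m₁ = m₂ := by
  have := r.2
  by_contra hne
  exact irrefl_of r.1 m₁ (trans_of r.1 (h₁ m₂ hm₂ (Ne.symm hne)) (h₂ m₁ hm₁ hne))

theorem exists_isTopIn (r : StrictLinearOrder α) {s : Set α} (hs : s.Finite) (hne : s.Nonempty) :
    ∃ m ∈ s, r.IsTopIn s m := by
  classical
  have := r.2
  -- in this order `x < y` is `r.1 x y`, so the `r`-top of `s` is its minimum
  let := linearOrderOfSTO r.1
  obtain ⟨m, hm, hmin⟩ := s.exists_min_image id hs hne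
  exact ⟨m, hm, fun x hx hxm => lt_of_le_of_ne (hmin x hx) (Ne.symm hxm)⟩

noncomputable def top (r : StrictLinearOrder α) {s : Set α} (hs : s.Finite) (hne : s.Nonempty) :
    α :=
  (r.exists_isTopIn hs hne).choose

theorem top_mem (r : StrictLinearOrder α) {s : Set α} (hs : s.Finite) (hne : s.Nonempty) :
    r.top hs hne ∈ s :=
  (r.exists_isTopIn hs hne).choose_spec.1

theorem isTopIn_top (r : StrictLinearOrder α) {s : Set α} (hs : s.Finite) (hne : s.Nonempty) :
    r.IsTopIn s (r.top hs hne) :=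
  (r.exists_isTopIn hs hne).choose_spec.2

theorem top_eq {r : StrictLinearOrder α} {s : Set α} (hs : s.Finite) (hne : s.Nonempty) {m : α}
    (hm : m ∈ s) (h : r.IsTopIn s m) : r.top hs hne = m :=
  (r.isTopIn_top hs hne).unique h (r.top_mem hs hne) hm

theorem isTopIn_comap_swap_iff [DecidableEq α] {r : StrictLinearOrder α} {s : Set α} {a b : α}
    (ha : a ∈ s) (hb : b ∈ s) :
    (r.comap (Equiv.swap a b).toEmbedding).IsTopIn s a ↔ r.IsTopIn s b := by
  suffices ∀ {r : StrictLinearOrder α} {a b}, a ∈ s → b ∈ s → r.IsTopIn s b →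
      (r.comap (Equiv.swap a b).toEmbedding).IsTopIn s a by
    refine ⟨fun h => ?_, this ha hb⟩
    simpa [comap_swap_comap_swap, Equiv.swap_comm] using this hb ha h
  intro r a b ha hb h x hx hxa
  simp only [comap_apply, Equiv.coe_toEmbedding, Equiv.swap_apply_left]
  rcases eq_or_ne x b with rfl | hxb
  · simpa using h a ha (Ne.symm hxa)
  · rw [Equiv.swap_apply_of_ne_of_ne hxa hxb]
    exact h x hx hxb

end StrictLinearOrder

open StrictLinearOrder

section LinearExtension

variable {H : Type*} {R : H → H → Prop}

theorem IsLinearExtension.comap (htrans : Transitive R) {r : StrictLinearOrder H} (f : H ↪ H)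
    (hf : ∀ z, R (f z) z ∧ R z (f z)) (hr : IsLinearExtension R r) :
    IsLinearExtension R (r.comap f) := fun x y hxy hyx =>
  hr _ _ (htrans (hf x).1 (htrans hxy (hf y).2))
    fun h => hyx (htrans (hf y).2 (htrans h (hf x).1))

theorem swap_apply_equivalent [DecidableEq H] (hrefl : Reflexive R) {a b : H} (hab : R a b)
    (hba : R b a) (z : H) : R (Equiv.swap a b z) z ∧ R z (Equiv.swap a b z) := by
  rcases eq_or_ne z a with rfl | hza
  · simpa using ⟨hba, hab⟩
  rcases eq_or_ne z b with rfl | hzb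
  · simpa using ⟨hab, hba⟩
  · rw [Equiv.swap_apply_of_ne_of_ne hza hzb]
    exact ⟨hrefl z, hrefl z⟩

theorem IsLinearExtension.isTopIn_of_isTopIn_class (htrans : Transitive R)
    {r : StrictLinearOrder H} (hr : IsLinearExtension R r) {W : Set H} {a m : H}
    (hmax : ∀ w ∈ W, R a w) (hm : m ∈ W ∧ R m a ∧ R a m)
    (htop : r.IsTopIn {w | w ∈ W ∧ R w a ∧ R a w} m) : r.IsTopIn W m := by
  intro w hw hwm
  by_cases hwa : R w a
  · exact htop w ⟨hw, hwa, hmax w hw⟩ hwm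
  · exact hr _ _ (htrans hm.2.1 (hmax w hw)) fun h => hwa (htrans h hm.2.1)

noncomputable def swapTopEquiv [Finite H] [DecidableEq H] (hrefl : Reflexive R)
    (htrans : Transitive R) {W : Set H} {a : H} (haW : a ∈ W) (hmax : ∀ w ∈ W, R a w) :
    {p : StrictLinearOrder H // IsLinearExtension R p ∧ p.IsTopIn W a} ×
        {w : H // w ∈ W ∧ R w a ∧ R a w} ≃
      {r : StrictLinearOrder H // IsLinearExtension R r} :=
  have haS : a ∈ {w | w ∈ W ∧ R w a ∧ R a w} := ⟨haW, hrefl a, hrefl a⟩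
  have hS := Set.toFinite {w | w ∈ W ∧ R w a ∧ R a w}
  { toFun := fun ps =>
      ⟨ps.1.1.comap (Equiv.swap a ps.2).toEmbedding,
        ps.1.2.1.comap htrans _ (swap_apply_equivalent hrefl ps.2.2.2.2 ps.2.2.2.1)⟩
    invFun := fun r =>
      have hm := r.1.top_mem hS ⟨a, haS⟩
      (⟨r.1.comap (Equiv.swap a (r.1.top hS ⟨a, haS⟩)).toEmbedding,
        r.2.comap htrans _ (swap_apply_equivalent hrefl hm.2.2 hm.2.1),
        (isTopIn_comap_swap_iff haW hm.1).2
          (r.2.isTopIn_of_isTopIn_class htrans hmax hm (r.1.isTopIn_top hS _))⟩,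
        ⟨_, hm⟩)
    left_inv := by
      rintro ⟨⟨p, hp, hpa⟩, ⟨s, hs⟩⟩
      have htop : (p.comap (Equiv.swap a s).toEmbedding).top hS ⟨a, haS⟩ = s := by
        refine top_eq hS _ hs ?_
        rw [Equiv.swap_comm]
        exact (isTopIn_comap_swap_iff (s := {w | w ∈ W ∧ R w a ∧ R a w}) hs haS).2
          (hpa.mono fun w hw => hw.1)
      ext <;> simp only [htop, comap_swap_comap_swap]
    right_inv := fun r => Subtype.ext (comap_swap_comap_swap _ _ r.1) }

end LinearExtension

/-- Let `R` be a total preorder on a finite set `H`, `W ⊆ H`, `a ∈ W` with `a ≿ w` for all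
`w ∈ W`, and `S = { w ∈ W : w ~ a }`.  Then the number of strict linear extensions of `R` in
which `a` is ranked above every other element of `W`, multiplied by `|S|`, equals the total
number of strict linear extensions of `R`. -/
theorem stmt_3 {H : Type*} [Finite H]
    (R : H → H → Prop) (hR : IsTotalPreorderRel R)
    (W : Set H) (a : H) (haW : a ∈ W) (hmax : ∀ w ∈ W, R a w) :
    Nat.card {r : StrictLinearOrder H //
          IsLinearExtension R r ∧ ∀ w ∈ W, w ≠ a → r.1 a w}
        * Nat.card {w : H // w ∈ W ∧ R w a ∧ R a w}
      = Nat.card {r : StrictLinearOrder H // IsLinearExtension R r} := by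
  classical
  rw [← Nat.card_prod]
  exact Nat.card_congr (swapTopEquiv hR.1 hR.2.1 haW hmax)
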